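/- arXiv:2509.07652 — 2 statements merged into one kernel-verified Lean document; each statement's English description precedes it below -/
import Mathlib

section
/- Let m ≥ 1, η > 0, δ > 2 and 0 < ε < δ − 2, and define G : ℝ^m → ℝ by G(U) = η[(δ−2)|U|^{δ−ε} sin²(|U|^{ε}/ε) + |U|^{δ}]. Then for every μ₀ > 2 there exists U ∈ ℝ^m with U ≠ 0 such that (∇G(U),U) < μ₀ G(U). In other words, G does not satisfy the Ambrosetti–Rabinowitz condition (G''₆). -/
/-!
For a radial function `G U = g ‖U‖` one has `⟪∇G U, U⟫ = r g'(r)` with `r = ‖U‖`.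
Writing `θ = r^ε/ε`, so that `r^ε = ε θ`, the profile `g r = (δ-2) r^(δ-ε) sin²θ + r^δ` has
`r g'(r) = (δ-2)(δ-ε) r^(δ-ε) sin²θ + (δ-2) r^δ sin 2θ + δ r^δ`.
At the radii where `sin 2θ = -1`, hence `sin²θ = 1/2`, which occur for arbitrarily large `r`,
`μ g(r) - r g'(r) = r^(δ-ε) ((δ-2)(μ-δ+ε)/2 + (μ-2) r^ε)`,
which is positive once `r^ε` is large because `μ > 2`.
-/

open RealInnerProductSpace Real

theorem inner_gradient_comp_norm_self {E : Type*} [NormedAddCommGroup E]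
    [InnerProductSpace ℝ E] [CompleteSpace E] {f : ℝ → ℝ} {f' : ℝ} {x : E} (hx : x ≠ 0)
    (hf : HasDerivAt f f' ‖x‖) :
    ⟪gradient (fun y => f ‖y‖) x, x⟫ = ‖x‖ * f' := by
  have hnorm : DifferentiableAt ℝ (‖·‖) x :=
    (contDiffAt_norm ℝ hx (n := 1)).differentiableAt one_ne_zero
  have hcomp : HasFDerivAt (fun y : E => f ‖y‖) _ x := hf.hasFDerivAt.comp x hnorm.hasFDerivAt
  rw [inner_gradient_left, hcomp.fderiv]
  simp [hnorm.fderiv_norm_self, mul_comm]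

noncomputable def oscillatingProfile (δ ε r : ℝ) : ℝ :=
  (δ - 2) * r ^ (δ - ε) * sin (r ^ ε / ε) ^ 2 + r ^ δ

theorem hasDerivAt_oscillatingProfile {δ ε r : ℝ} (hε : ε ≠ 0) (hr : 0 < r) :
    HasDerivAt (oscillatingProfile δ ε)
      (((δ - 2) * (δ - ε) * r ^ (δ - ε) * sin (r ^ ε / ε) ^ 2
        + (δ - 2) * r ^ δ * sin (2 * (r ^ ε / ε)) + δ * r ^ δ) / r) r := by
  have hpow (p : ℝ) : HasDerivAt (fun s : ℝ => s ^ p) (p * r ^ (p - 1)) r :=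
    hasDerivAt_rpow_const (Or.inl hr.ne')
  have h : HasDerivAt (oscillatingProfile δ ε) _ r :=
    (((hpow (δ - ε)).const_mul (δ - 2)).mul (((hpow ε).div_const ε).sin.pow 2)).add (hpow δ)
  refine h.congr_deriv ?_
  have hsplit : r ^ δ = r ^ (δ - ε) * r ^ ε := by rw [← rpow_add hr, sub_add_cancel]
  simp only [rpow_sub_one hr.ne', hsplit, sin_two_mul, Pi.pow_apply]
  field_simp
  ring

theorem euler_lt_mul_oscillatingProfile {δ ε μ r : ℝ} (hr : 0 < r)
    (hsin : sin (2 * (r ^ ε / ε)) = -1)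
    (hlarge : (δ - 2) * (δ - ε - μ) < 2 * (μ - 2) * r ^ ε) :
    (δ - 2) * (δ - ε) * r ^ (δ - ε) * sin (r ^ ε / ε) ^ 2
      + (δ - 2) * r ^ δ * sin (2 * (r ^ ε / ε)) + δ * r ^ δ
      < μ * oscillatingProfile δ ε r := by
  have hcos : cos (2 * (r ^ ε / ε)) = 0 := by
    simpa [hsin] using sin_sq_add_cos_sq (2 * (r ^ ε / ε))
  have hsin_sq : sin (r ^ ε / ε) ^ 2 = 1 / 2 := by rw [sin_sq_eq_half_sub, hcos]; norm_num
  have hsplit : r ^ δ = r ^ (δ - ε) * r ^ ε := by rw [← rpow_add hr, sub_add_cancel]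
  have hgap := mul_pos (rpow_pos_of_pos hr (δ - ε)) (sub_pos.2 hlarge)
  rw [oscillatingProfile, hsin, hsin_sq, hsplit]
  linarith

theorem exists_rpow_gt_and_sin_eq_neg_one {ε : ℝ} (hε : 0 < ε) (C : ℝ) :
    ∃ r > 0, C < r ^ ε ∧ sin (2 * (r ^ ε / ε)) = -1 := by
  have hM : 0 ≤ max C 0 * (2 / ε) := mul_nonneg (le_max_right C 0) (div_pos two_pos hε).le
  obtain ⟨k, hk⟩ := exists_int_gt (max C 0 * (2 / ε) + 2)
  set t := -(π / 2) + k * (2 * π) with ht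
  have hCt : max C 0 * (2 / ε) < t := by nlinarith [pi_gt_three, pi_le_four]
  have htpos : 0 < ε * t / 2 := by have := hM.trans_lt hCt; positivity
  refine ⟨(ε * t / 2) ^ ε⁻¹, rpow_pos_of_pos htpos _, ?_⟩
  rw [rpow_inv_rpow htpos.le hε.ne']
  constructor
  · rw [mul_div_assoc', div_lt_iff₀ hε] at hCt
    linarith [le_max_left C 0]
  · have hθ : 2 * (ε * t / 2 / ε) = t := by field_simp
    rw [hθ, sin_eq_neg_one_iff]
    exact ⟨k, ht.symm⟩

theorem stmt_7_general (m : ℕ) (hm : 1 ≤ m) (η δ ε : ℝ) (hη : 0 < η)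
    (hε : 0 < ε)
    (G : EuclideanSpace ℝ (Fin m) → ℝ)
    (hGdef : ∀ U : EuclideanSpace ℝ (Fin m),
      G U = η * ((δ - 2) * ‖U‖ ^ (δ - ε) * Real.sin (‖U‖ ^ ε / ε) ^ 2 + ‖U‖ ^ δ)) :
    ∀ μ₀ : ℝ, 2 < μ₀ →
      ∃ U : EuclideanSpace ℝ (Fin m), U ≠ 0 ∧ ⟪gradient G U, U⟫ < μ₀ * G U := by
  intro μ₀ hμ₀
  obtain ⟨r, hr, hlarge, hsin⟩ :=
    exists_rpow_gt_and_sin_eq_neg_one hε ((δ - 2) * (δ - ε - μ₀) / (2 * (μ₀ - 2)))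
  rw [div_lt_iff₀ (by linarith)] at hlarge
  have : Nonempty (Fin m) := ⟨⟨0, hm⟩⟩
  obtain ⟨U, rfl⟩ := exists_norm_eq (EuclideanSpace ℝ (Fin m)) hr.le
  have hG : G = fun U => η * oscillatingProfile δ ε ‖U‖ := funext hGdef
  refine ⟨U, norm_pos_iff.mp hr, ?_⟩
  rw [hG, inner_gradient_comp_norm_self (norm_pos_iff.mp hr)
    ((hasDerivAt_oscillatingProfile hε.ne' hr).const_mul η), mul_div_assoc',
    mul_div_cancel₀ _ hr.ne', mul_left_comm]
  exact mul_lt_mul_of_pos_left (euler_lt_mul_oscillatingProfile hr hsin (by linarith)) hη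

theorem stmt_7 (m : ℕ) (hm : 1 ≤ m) (η δ ε : ℝ) (hη : 0 < η) (hδ : 2 < δ)
    (hε : 0 < ε) (hεδ : ε < δ - 2)
    (G : EuclideanSpace ℝ (Fin m) → ℝ)
    (hGdef : ∀ U : EuclideanSpace ℝ (Fin m),
      G U = η * ((δ - 2) * ‖U‖ ^ (δ - ε) * Real.sin (‖U‖ ^ ε / ε) ^ 2 + ‖U‖ ^ δ)) :
    ∀ μ₀ : ℝ, 2 < μ₀ →
      ∃ U : EuclideanSpace ℝ (Fin m), U ≠ 0 ∧ ⟪gradient G U, U⟫ < μ₀ * G U :=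
  stmt_7_general m hm η δ ε hη hε G hGdef
end

section
/- Let m ≥ 1, η > 0 and τ > 0, and define G : ℝ^m → ℝ by G(U) = ητ[1 − 1/ln(e+|U|)]|U|². Then for every μ with 1 < μ < 2, one has (½(∇G(U),U) − G(U)) / |U|^{μ} → +∞ as |U| → ∞; that is, G satisfies condition (G₈) for every μ ∈ (1,2). -/
/-!
`G` is radial, `G U = g ‖U‖` with `g r = c (1 - 1 / ln (e + r)) r²` and `c = ητ`, so
`(∇G(U), U) = r g'(r)` for `r = ‖U‖` and the quadratic parts cancel in `½ r g'(r) - g(r)`, leaving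
`c r³ / (2 (e + r) ln² (e + r))`. For `r ≥ 3` this is at least `c r² / (16 ln² r)`, and
`r^(2 - μ) / ln² r → ∞` because `ln r` grows slower than any power of `r`.
-/

open RealInnerProductSpace Filter Real

section Radial

variable {E : Type*} [NormedAddCommGroup E] [InnerProductSpace ℝ E] [CompleteSpace E]
  {g : ℝ → ℝ} {g' : ℝ} {x : E}

theorem HasDerivAt.hasGradientAt_comp_norm (hg : HasDerivAt g g' ‖x‖) (hx : x ≠ 0) :
    HasGradientAt (fun y => g ‖y‖) ((g' / ‖x‖) • x) x := by
  have hx₀ : 0 < ‖x‖ := norm_pos_iff.mpr hx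
  have hsqrt : HasDerivAt (fun t => g √t) (g' * (1 / (2 * ‖x‖))) (‖x‖ ^ 2) := by
    have h := Real.hasDerivAt_sqrt (pow_pos hx₀ 2).ne'
    rw [Real.sqrt_sq hx₀.le] at h
    rw [← Real.sqrt_sq hx₀.le] at hg
    exact hg.comp _ h
  have hG := hsqrt.comp_hasFDerivAt x (hasStrictFDerivAt_norm_sq x).hasFDerivAt
  simp only [Function.comp_def, Real.sqrt_sq (norm_nonneg _)] at hG
  rw [hasGradientAt_iff_hasFDerivAt]
  refine hG.congr_fderiv (ContinuousLinearMap.ext fun v => ?_)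
  simp only [InnerProductSpace.toDual_apply_apply, map_smul, smul_apply, coe_innerSL_apply,
    nsmul_eq_mul, Nat.cast_ofNat, smul_eq_mul]
  field_simp

theorem HasDerivAt.inner_gradient_comp_norm (hg : HasDerivAt g g' ‖x‖) (hx : x ≠ 0) :
    ⟪gradient (fun y => g ‖y‖) x, x⟫ = ‖x‖ * g' := by
  rw [(hg.hasGradientAt_comp_norm hx).gradient, real_inner_smul_left,
    real_inner_self_eq_norm_sq]
  field_simp [norm_ne_zero_iff.mpr hx]

end Radial

theorem log_exp_one_add_pos {r : ℝ} (hr : 0 ≤ r) : 0 < log (exp 1 + r) :=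
  log_pos (by linarith [add_one_le_exp (1 : ℝ)])

noncomputable def logDampedSq (c r : ℝ) : ℝ := c * (1 - 1 / log (exp 1 + r)) * r ^ 2

theorem hasDerivAt_logDampedSq (c : ℝ) {r : ℝ} (hr : 0 ≤ r) :
    HasDerivAt (logDampedSq c)
      (c * (r ^ 2 / ((exp 1 + r) * log (exp 1 + r) ^ 2) +
        2 * r * (1 - 1 / log (exp 1 + r)))) r := by
  have hL : log (exp 1 + r) ≠ 0 := (log_exp_one_add_pos hr).ne'
  have hlog : HasDerivAt (fun s => log (exp 1 + s)) (1 / (exp 1 + r)) r := by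
    simpa using ((hasDerivAt_id r).const_add (exp 1)).log (by positivity)
  have h := (((hlog.inv hL).const_sub 1).const_mul c).mul (hasDerivAt_pow 2 r)
  refine (h.congr_deriv ?_).congr_of_eventuallyEq (.of_eq (funext fun s => ?_))
  · simp only [Pi.inv_apply]
    field_simp
    ring
  · simp [logDampedSq]

theorem half_mul_deriv_sub_logDampedSq (c : ℝ) {r : ℝ} (hr : 0 ≤ r) :
    1 / 2 * (r * deriv (logDampedSq c) r) - logDampedSq c r =
      c / 2 * (r ^ 3 / ((exp 1 + r) * log (exp 1 + r) ^ 2)) := by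
  have hL : log (exp 1 + r) ≠ 0 := (log_exp_one_add_pos hr).ne'
  rw [(hasDerivAt_logDampedSq c hr).deriv, logDampedSq]
  field_simp
  ring

theorem tendsto_rpow_div_log_sq_atTop {ν : ℝ} (hν : 0 < ν) :
    Tendsto (fun r => r ^ ν / log r ^ 2) atTop atTop := by
  refine ((tendsto_exp_mul_div_rpow_atTop 2 ν hν).comp tendsto_log_atTop).congr' ?_
  filter_upwards [eventually_gt_atTop 0] with r hr
  rw [Function.comp_apply, rpow_def_of_pos hr, mul_comm, rpow_two]

theorem tendsto_cube_div_log_sq_div_rpow_atTop {μ : ℝ} (hμ : μ < 2) :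
    Tendsto (fun r => r ^ 3 / ((exp 1 + r) * log (exp 1 + r) ^ 2) / r ^ μ) atTop atTop := by
  refine tendsto_atTop_mono' _ ?_
    ((tendsto_rpow_div_log_sq_atTop (sub_pos.2 hμ)).const_mul_atTop (by norm_num : (0:ℝ) < 1 / 8))
  filter_upwards [eventually_ge_atTop 3] with r hr
  have hr₀ : 0 < r := by linarith
  have hL : 0 < log (exp 1 + r) := log_exp_one_add_pos hr₀.le
  have he : exp 1 + r ≤ 2 * r := by linarith [exp_one_lt_d9]
  have hlog : log (exp 1 + r) ≤ 2 * log r := calc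
    log (exp 1 + r) ≤ log (r ^ 2) := log_le_log (by positivity) (by nlinarith)
    _ = 2 * log r := by rw [log_pow]; norm_num
  have hden : (exp 1 + r) * log (exp 1 + r) ^ 2 ≤ 8 * r * log r ^ 2 := by
    have := pow_le_pow_left₀ hL.le hlog 2
    nlinarith
  calc 1 / 8 * (r ^ (2 - μ) / log r ^ 2) = r ^ 3 / (8 * r * log r ^ 2) / r ^ μ := by
        rw [rpow_sub hr₀, rpow_two]; field_simp
    _ ≤ _ := by gcongr

theorem stmt_18_general (m : ℕ) (η τ : ℝ) (hη : 0 < η) (hτ : 0 < τ)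
    (G : EuclideanSpace ℝ (Fin m) → ℝ)
    (hGdef : ∀ U : EuclideanSpace ℝ (Fin m),
      G U = η * τ * (1 - 1 / Real.log (Real.exp 1 + ‖U‖)) * ‖U‖ ^ 2) :
    ∀ μ : ℝ, 1 < μ → μ < 2 →
      Filter.Tendsto
        (fun U : EuclideanSpace ℝ (Fin m) =>
          ((1 / 2) * ⟪gradient G U, U⟫ - G U) / ‖U‖ ^ μ)
        (Bornology.cobounded (EuclideanSpace ℝ (Fin m))) Filter.atTop := by
  intro μ _ hμ
  have hG : G = fun U => logDampedSq (η * τ) ‖U‖ := funext hGdef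
  refine (((tendsto_cube_div_log_sq_div_rpow_atTop hμ).const_mul_atTop
    (by positivity : 0 < η * τ / 2)).comp tendsto_norm_cobounded_atTop).congr' ?_
  filter_upwards [tendsto_norm_cobounded_atTop.eventually_gt_atTop 0] with U hU
  have hderiv := (hasDerivAt_logDampedSq (η * τ) (norm_nonneg U)).differentiableAt.hasDerivAt
  rw [hG, hderiv.inner_gradient_comp_norm (norm_pos_iff.mp hU),
    half_mul_deriv_sub_logDampedSq _ (norm_nonneg U)]
  simp only [Function.comp_apply, mul_div_assoc]

theorem stmt_18 (m : ℕ) (hm : 1 ≤ m) (η τ : ℝ) (hη : 0 < η) (hτ : 0 < τ)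
    (G : EuclideanSpace ℝ (Fin m) → ℝ)
    (hGdef : ∀ U : EuclideanSpace ℝ (Fin m),
      G U = η * τ * (1 - 1 / Real.log (Real.exp 1 + ‖U‖)) * ‖U‖ ^ 2) :
    ∀ μ : ℝ, 1 < μ → μ < 2 →
      Filter.Tendsto
        (fun U : EuclideanSpace ℝ (Fin m) =>
          ((1 / 2) * ⟪gradient G U, U⟫ - G U) / ‖U‖ ^ μ)
        (Bornology.cobounded (EuclideanSpace ℝ (Fin m))) Filter.atTop :=
  stmt_18_general m η τ hη hτ G hGdef
end
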